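/- arXiv:1103.0534 — 5 statements merged into one kernel-verified Lean document; each statement's English description precedes it below -/
import Mathlib

section
/- Let G = (V, E) be a finite undirected graph, let v1 ∈ V, and let R be a finite family of subsets X ⊆ V with v1 ∈ X for all X ∈ R. Then the number of pairs (X, (X1, X2)) where X ∈ R and (X1, X2) is a consistent cut of G[X] with v1 ∈ X1 is congruent modulo 2 to the number of X ∈ R such that G[X] is connected. -/
/-!
When `G[X]` is connected, its only consistent cut with `v₁` on the left is `(X, ∅)`. Otherwise
pick a component `C` of `G[X]` missing `v₁`: moving `C` to the other side, `(X₁, X₂) ↦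
(X₁ ∆ C, X₂ ∆ C)`, is a fixed-point-free involution on the consistent cuts, so there is an even
number of them. Summing these parities over `R` gives the congruence.
-/

open Finset
open scoped symmDiff

theorem Function.Involutive.natCard_modEq_natCard_fixedPoints {α : Type*} [Finite α] {f : α → α}
    (hf : Function.Involutive f) : Nat.card α ≡ Nat.card (Function.fixedPoints f) [MOD 2] := by
  classical
  have := Fintype.ofFinite α
  let f' : Function.End α := f
  have hf2 : f' ^ 2 ^ 1 = 1 := by
    rw [pow_one, sq]
    exact funext hf
  simpa only [Nat.card_eq_fintype_card] using Equiv.Perm.card_fixedPoints_modEq hf2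

theorem Nat.card_subtype_mem_and_mem_eq_sum {α β : Type*} (s : Finset α) (t : α → Set β)
    [∀ a, Finite (t a)] :
    Nat.card {q : α × β // q.1 ∈ s ∧ q.2 ∈ t q.1} = ∑ a ∈ s, Nat.card (t a) := by
  let e : {q : α × β // q.1 ∈ s ∧ q.2 ∈ t q.1} ≃ Σ a : s, t a :=
    { toFun := fun q => ⟨⟨q.1.1, q.2.1⟩, q.1.2, q.2.2⟩
      invFun := fun x => ⟨(x.1, x.2), x.1.2, x.2.2⟩
      left_inv := fun _ => rfl
      right_inv := fun _ => rfl }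
  rw [Nat.card_congr e, Nat.card_sigma, Finset.sum_coe_sort s (fun a => Nat.card (t a))]

namespace SimpleGraph

variable {V W : Type*}

theorem Reachable.mem_of_forall_adj {H : SimpleGraph W} {S : Set W}
    (hS : ∀ a b, H.Adj a b → a ∈ S → b ∈ S) {a b : W} (h : H.Reachable a b) (ha : a ∈ S) :
    b ∈ S := by
  obtain ⟨p⟩ := h
  induction p with
  | nil => exact ha
  | cons hadj _ ih => exact ih (hS _ _ hadj ha)

variable (G : SimpleGraph V)

def consistentCuts (v₁ : V) (X : Set V) : Set (Set V × Set V) :=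
  {p | p.1 ∪ p.2 = X ∧ p.1 ∩ p.2 = ∅ ∧ v₁ ∈ p.1 ∧ ∀ u v, G.Adj u v → ¬(u ∈ p.1 ∧ v ∈ p.2)}

variable {G} {v₁ : V} {X : Set V}

theorem consistentCuts_eq_singleton (hv₁ : v₁ ∈ X) (hX : (G.induce X).Connected) :
    G.consistentCuts v₁ X = {(X, ∅)} := by
  ext ⟨X₁, X₂⟩
  constructor
  · rintro ⟨hunion, hinter, hv₁X₁, hcross⟩
    have hclosed : ∀ a b : X, (G.induce X).Adj a b → a.1 ∈ X₁ → b.1 ∈ X₁ := by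
      intro a b hab ha
      have hb : b.1 ∈ X₁ ∪ X₂ := hunion ▸ b.2
      exact hb.resolve_right fun hb₂ => hcross a b hab ⟨ha, hb₂⟩
    have hX₁ : X₁ = X := by
      refine subset_antisymm (hunion ▸ Set.subset_union_left) fun b hb => ?_
      exact (hX.preconnected ⟨v₁, hv₁⟩ ⟨b, hb⟩).mem_of_forall_adj (S := {a : X | a.1 ∈ X₁})
        hclosed hv₁X₁
    refine Prod.ext hX₁ (Set.eq_empty_of_subset_empty fun v hv => hinter ▸ ⟨?_, hv⟩)
    rw [hX₁, ← hunion]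
    exact Or.inr hv
  · rintro ⟨⟩
    exact ⟨Set.union_empty X, Set.inter_empty X, hv₁, fun _ _ _ h => h.2⟩

theorem symmDiff_mem_consistentCuts {C : Set V} (hCX : C ⊆ X)
    (hC : ∀ u v, G.Adj u v → u ∈ X → v ∈ X → u ∈ C → v ∈ C) (hv₁C : v₁ ∉ C)
    {p : Set V × Set V} (hp : p ∈ G.consistentCuts v₁ X) :
    (p.1 ∆ C, p.2 ∆ C) ∈ G.consistentCuts v₁ X := by
  obtain ⟨X₁, X₂⟩ := p
  obtain ⟨hunion, hinter, hv₁X₁, hcross⟩ := hp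
  have hmem : ∀ v, v ∈ X ↔ v ∈ X₁ ∨ v ∈ X₂ := fun v => by rw [← hunion]; rfl
  have hdisj : ∀ v, ¬(v ∈ X₁ ∧ v ∈ X₂) := fun v hv => (hinter ▸ hv : v ∈ (∅ : Set V))
  have hCmem : ∀ v ∈ C, v ∈ X₁ ∨ v ∈ X₂ := fun v hv => (hmem v).mp (hCX hv)
  refine ⟨?_, ?_, Or.inl ⟨hv₁X₁, hv₁C⟩, ?_⟩
  · ext v
    have := hCmem v
    simp only [Set.mem_union, Set.mem_symmDiff, hmem]
    tauto
  · ext v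
    have := hdisj v
    have := hCmem v
    simp only [Set.mem_inter_iff, Set.mem_symmDiff, Set.mem_empty_iff_false, iff_false]
    tauto
  · rintro u v huv ⟨hu | ⟨huC, huX₁⟩, hv | ⟨hvC, hvX₂⟩⟩
    · exact hcross u v huv ⟨hu.1, hv.1⟩
    · exact hu.2 (hC v u huv.symm (hCX hvC) (hmem u |>.mpr (Or.inl hu.1)) hvC)
    · exact hv.2 (hC u v huv (hCX huC) (hmem v |>.mpr (Or.inr hv.1)) huC)
    · exact hcross v u huv.symm ⟨(hCmem v hvC).resolve_right hvX₂,
        (hCmem u huC).resolve_left huX₁⟩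

theorem even_card_consistentCuts [Finite V] (hv₁ : v₁ ∈ X) (hX : ¬(G.induce X).Connected) :
    Even (Nat.card (G.consistentCuts v₁ X)) := by
  obtain ⟨w, hw⟩ : ∃ w : X, ¬(G.induce X).Reachable ⟨v₁, hv₁⟩ w := by
    by_contra! h
    exact hX ((connected_iff_exists_forall_reachable _).2 ⟨_, h⟩)
  let C : Set V := {v | ∃ hv : v ∈ X, (G.induce X).Reachable w ⟨v, hv⟩}
  have hC : ∀ u v, G.Adj u v → u ∈ X → v ∈ X → u ∈ C → v ∈ C :=
    fun u v huv _ hv ⟨_, hwu⟩ => ⟨hv, hwu.trans (Adj.reachable (by simpa using huv))⟩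
  have hv₁C : v₁ ∉ C := fun ⟨_, hwv₁⟩ => hw hwv₁.symm
  let toggle (p : G.consistentCuts v₁ X) : G.consistentCuts v₁ X :=
    ⟨(p.1.1 ∆ C, p.1.2 ∆ C), symmDiff_mem_consistentCuts (fun _ hv => hv.1) hC hv₁C p.2⟩
  have hinv : Function.Involutive toggle := fun p =>
    Subtype.ext <|
      Prod.ext (symmDiff_symmDiff_cancel_right _ _) (symmDiff_symmDiff_cancel_right _ _)
  have hfree : Function.fixedPoints toggle = ∅ := by
    refine Set.eq_empty_of_forall_notMem fun p hp => ?_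
    have hC₀ : C = ∅ := symmDiff_eq_left.mp (congrArg (·.1.1) hp)
    exact hC₀.subset ⟨w.2, Reachable.rfl⟩
  simpa [hfree, Nat.modEq_zero_iff_dvd, even_iff_two_dvd] using
    hinv.natCard_modEq_natCard_fixedPoints

theorem odd_card_consistentCuts_iff [Finite V] (hv₁ : v₁ ∈ X) :
    Odd (Nat.card (G.consistentCuts v₁ X)) ↔ (G.induce X).Connected := by
  refine ⟨fun hodd => ?_, fun hX => ?_⟩
  · by_contra hX
    exact Nat.not_odd_iff_even.mpr (even_card_consistentCuts hv₁ hX) hodd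
  · simp [consistentCuts_eq_singleton hv₁ hX]

end SimpleGraph

/-- The number of pairs `(X, (X1, X2))` with `X ∈ R` and `(X1, X2)` a consistent cut of
`G[X]` with `v1 ∈ X1` is congruent mod 2 to the number of `X ∈ R` with `G[X]` connected. -/
theorem stmt3 {V : Type*} [Fintype V] (G : SimpleGraph V) (v1 : V)
    (R : Finset (Set V)) (hR : ∀ X ∈ R, v1 ∈ X) :
    Nat.card {q : Set V × Set V × Set V //
        q.1 ∈ R ∧ q.2.1 ∪ q.2.2 = q.1 ∧ q.2.1 ∩ q.2.2 = ∅ ∧ v1 ∈ q.2.1 ∧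
        ∀ u v, G.Adj u v → ¬(u ∈ q.2.1 ∧ v ∈ q.2.2)} ≡
      Nat.card {X : Set V // X ∈ R ∧ (G.induce X).Connected} [MOD 2] := by
  classical
  calc _ = ∑ X ∈ R, Nat.card (G.consistentCuts v1 X) :=
        Nat.card_subtype_mem_and_mem_eq_sum R (G.consistentCuts v1)
    _ ≡ ∑ X ∈ R, if (G.induce X).Connected then 1 else 0 [MOD 2] :=
        Nat.ModEq.sum fun X hX => by
          have hparity := G.odd_card_consistentCuts_iff (hR X hX)
          split_ifs with hX
          · exact Nat.odd_iff.mp (hparity.mpr hX)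
          · exact Nat.even_iff.mp (Nat.not_odd_iff_even.mp (hparity.not.mpr hX))
    _ = #{X ∈ R | (G.induce X).Connected} := (card_filter _ _).symm
    _ = _ := by
        rw [← Nat.card_eq_finsetCard]
        exact Nat.card_congr (Equiv.subtypeEquivRight fun _ => mem_filter)
end

section
/- Let G = (V, E) be a finite undirected graph and let R be a finite family of pairs (X, M) with M ⊆ X ⊆ V. Then the number of triples (X, M, (X1, X2)) where (X, M) ∈ R and (X1, X2) is a consistent cut of G[X] with M ⊆ X1 is congruent modulo 2 to the number of pairs (X, M) ∈ R such that every connected component of G[X] contains at least one vertex of M. -/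
open Classical in
/-- Counting boolean functions forced true on a subset. -/
lemma aux_bool_count {α : Type*} [Finite α] (P : α → Prop) :
    Nat.card {g : α → Bool // ∀ a, P a → g a = true} =
      2 ^ Nat.card {a : α // ¬ P a} := by
  have e : {g : α → Bool // ∀ a, P a → g a = true} ≃ ({a : α // ¬ P a} → Bool) :=
    { toFun := fun g a => g.1 a.1
      invFun := fun h => ⟨fun a => if hp : P a then true else h ⟨a, hp⟩,
        fun a ha => by simp [ha]⟩
      left_inv := fun g => by
        ext a
        by_cases hp : P a <;> simp [hp, g.2 a]
      right_inv := fun h => by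
        ext a
        simp [a.2] }
  rw [Nat.card_congr e, Nat.card_fun]
  norm_num

/-- Vertices in the same connected component of the induced graph lie on the same
side of a consistent cut. -/
lemma aux_side {V : Type*} (G : SimpleGraph V) (X X1 X2 : Set V)
    (hu : X1 ∪ X2 = X) (hd : X1 ∩ X2 = ∅)
    (hcut : ∀ u v, G.Adj u v → ¬(u ∈ X1 ∧ v ∈ X2))
    (v w : X) (h : (G.induce X).Reachable v w) : ((v : V) ∈ X1 ↔ (w : V) ∈ X1) := by
  obtain ⟨p⟩ := h
  induction p with
  | nil => rfl
  | cons hadj p ih =>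
    rename_i a b c
    refine Iff.trans ?_ ih
    have hab : G.Adj a b := hadj
    have haX : (a : V) ∈ X1 ∪ X2 := hu ▸ a.2
    have hbX : (b : V) ∈ X1 ∪ X2 := hu ▸ b.2
    constructor
    · intro h1
      rcases hbX with h2 | h2
      · exact h2
      · exact absurd ⟨h1, h2⟩ (hcut _ _ hab)
    · intro h1
      rcases haX with h2 | h2
      · exact h2
      · exact absurd ⟨h1, h2⟩ (hcut _ _ hab.symm)

open Classical in
/-- The set of consistent cuts of `G[X]` with `M ⊆ X1` is equinumerous with boolean
functions on components forced true on components meeting `M`. -/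
lemma aux_cut_equiv {V : Type*} (G : SimpleGraph V) (X M : Set V) (hMX : M ⊆ X) :
    Nonempty ({q : Set V × Set V // q.1 ∪ q.2 = X ∧ q.1 ∩ q.2 = ∅ ∧ M ⊆ q.1 ∧
        ∀ u v, G.Adj u v → ¬(u ∈ q.1 ∧ v ∈ q.2)} ≃
      {g : (G.induce X).ConnectedComponent → Bool //
        ∀ C, (∃ v : X, (v : V) ∈ M ∧ (G.induce X).connectedComponentMk v = C) →
          g C = true}) := by
  refine ⟨{
    toFun := fun q => ⟨fun C => decide ((↑(Quot.out C) : V) ∈ q.1.1), ?_⟩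
    invFun := fun g => ⟨(({v : V | ∃ h : v ∈ X, g.1 ((G.induce X).connectedComponentMk ⟨v, h⟩) = true},
      {v : V | ∃ h : v ∈ X, g.1 ((G.induce X).connectedComponentMk ⟨v, h⟩) = false})), ?_, ?_, ?_, ?_⟩
    left_inv := ?_
    right_inv := ?_ }⟩
  · -- forced true condition
    rintro C ⟨v, hvM, hvC⟩
    obtain ⟨⟨X1, X2⟩, hu, hd, hM, hcut⟩ := q
    simp only [decide_eq_true_eq]
    have hreach : (G.induce X).Reachable v (Quot.out C) := by
      apply SimpleGraph.ConnectedComponent.exact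
      rw [hvC]
      exact (Quot.out_eq C).symm
    exact (aux_side G X X1 X2 hu hd hcut v (Quot.out C) hreach).mp (hM hvM)
  · -- union
    ext v
    constructor
    · rintro (⟨h, _⟩ | ⟨h, _⟩) <;> exact h
    · intro hv
      by_cases hg : g.1 ((G.induce X).connectedComponentMk ⟨v, hv⟩) = true
      · exact Or.inl ⟨hv, hg⟩
      · exact Or.inr ⟨hv, Bool.not_eq_true _ ▸ hg⟩
  · -- disjoint
    ext v
    simp only [Set.mem_inter_iff, Set.mem_setOf_eq, Set.mem_empty_iff_false, iff_false]
    rintro ⟨⟨h1, hg1⟩, ⟨h2, hg2⟩⟩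
    exact absurd (hg1.symm.trans hg2) (by simp)
  · -- M ⊆ X1
    intro v hv
    exact ⟨hMX hv, g.2 _ ⟨⟨v, hMX hv⟩, hv, rfl⟩⟩
  · -- no crossing edge
    rintro u v hadj ⟨⟨hu1, hg1⟩, ⟨hv1, hg2⟩⟩
    have : (G.induce X).Adj ⟨u, hu1⟩ ⟨v, hv1⟩ := hadj
    have := SimpleGraph.ConnectedComponent.connectedComponentMk_eq_of_adj this
    rw [this, hg2] at hg1
    exact absurd hg1 (by simp)
  · -- left inverse
    rintro ⟨⟨X1, X2⟩, hu, hd, hM, hcut⟩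
    have key : ∀ (v : V) (h : v ∈ X),
        ((↑(Quot.out ((G.induce X).connectedComponentMk ⟨v, h⟩)) : V) ∈ X1 ↔ v ∈ X1) := by
      intro v h
      exact aux_side G X X1 X2 hu hd hcut _ ⟨v, h⟩
        (SimpleGraph.ConnectedComponent.exact (Quot.out_eq _))
    refine Subtype.ext (Prod.ext ?_ ?_) <;> ext v
    · simp only [Set.mem_setOf_eq, decide_eq_true_eq]
      constructor
      · rintro ⟨h, hg⟩; exact (key v h).mp hg
      · intro hv
        have hvX : v ∈ X := hu ▸ Or.inl hv
        exact ⟨hvX, (key v hvX).mpr hv⟩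
    · simp only [Set.mem_setOf_eq, decide_eq_false_iff_not]
      constructor
      · rintro ⟨h, hg⟩
        have hv1 : v ∉ X1 := fun hv => hg ((key v h).mpr hv)
        have hvX : v ∈ X1 ∪ X2 := hu ▸ h
        exact hvX.resolve_left hv1
      · intro hv
        have hvX : v ∈ X := hu ▸ Or.inr hv
        refine ⟨hvX, fun hg => ?_⟩
        have : v ∈ X1 := (key v hvX).mp hg
        exact absurd (hd ▸ Set.mem_inter this hv) (Set.notMem_empty v)
  · -- right inverse
    rintro ⟨g, hg⟩
    refine Subtype.ext ?_
    funext C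
    have hout : (G.induce X).connectedComponentMk (Quot.out C) = C := Quot.out_eq C
    have hmem : ((↑(Quot.out C) : V) ∈ {v : V | ∃ h : v ∈ X,
        g ((G.induce X).connectedComponentMk ⟨v, h⟩) = true}) ↔ g C = true := by
      constructor
      · rintro ⟨h, hgt⟩
        rwa [show (⟨↑(Quot.out C), h⟩ : X) = Quot.out C from rfl, hout] at hgt
      · intro h
        exact ⟨(Quot.out C).2, by
          rwa [show (⟨↑(Quot.out C), (Quot.out C).2⟩ : X) = Quot.out C from rfl, hout]⟩
    cases hb : g C with
    | false => simp only [decide_eq_false_iff_not, hmem, hb]; simp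
    | true => simp only [decide_eq_true_eq, hmem, hb]

open Classical in
/-- Parity of the number of consistent cuts. -/
lemma aux_parity {V : Type*} [Fintype V] (G : SimpleGraph V) (X M : Set V) (hMX : M ⊆ X) :
    Nat.card {q : Set V × Set V // q.1 ∪ q.2 = X ∧ q.1 ∩ q.2 = ∅ ∧ M ⊆ q.1 ∧
        ∀ u v, G.Adj u v → ¬(u ∈ q.1 ∧ v ∈ q.2)} % 2 =
      if (∀ C : (G.induce X).ConnectedComponent, ∃ v : X, (v : V) ∈ M ∧
          (G.induce X).connectedComponentMk v = C) then 1 else 0 := by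
  obtain ⟨e⟩ := aux_cut_equiv G X M hMX
  rw [Nat.card_congr e, aux_bool_count]
  by_cases hc : ∀ C : (G.induce X).ConnectedComponent, ∃ v : X, (v : V) ∈ M ∧
      (G.induce X).connectedComponentMk v = C
  · rw [if_pos hc]
    have : IsEmpty {C : (G.induce X).ConnectedComponent //
        ¬ ∃ v : X, (v : V) ∈ M ∧ (G.induce X).connectedComponentMk v = C} :=
      ⟨fun C => C.2 (hc C.1)⟩
    rw [Nat.card_of_isEmpty]
    rfl
  · rw [if_neg hc]
    push_neg at hc
    obtain ⟨C, hC⟩ := hc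
    have hne : Nonempty {C : (G.induce X).ConnectedComponent //
        ¬ ∃ v : X, (v : V) ∈ M ∧ (G.induce X).connectedComponentMk v = C} := ⟨⟨C, by push_neg; exact hC⟩⟩
    have hpos : 0 < Nat.card {C : (G.induce X).ConnectedComponent //
        ¬ ∃ v : X, (v : V) ∈ M ∧ (G.induce X).connectedComponentMk v = C} :=
      Nat.card_pos
    obtain ⟨k, hk⟩ := Nat.exists_eq_add_of_lt hpos
    rw [hk]
    rw [pow_add, pow_one]
    omega

/-- The number of triples `(X, M, (X1, X2))` with `(X, M) ∈ R` and `(X1, X2)` a consistent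
cut of `G[X]` with `M ⊆ X1` is congruent mod 2 to the number of `(X, M) ∈ R` such that
every connected component of `G[X]` contains a vertex of `M`. -/
theorem stmt4 {V : Type*} [Fintype V] (G : SimpleGraph V)
    (R : Finset (Set V × Set V)) (hR : ∀ p ∈ R, p.2 ⊆ p.1) :
    Nat.card {q : (Set V × Set V) × Set V × Set V //
        q.1 ∈ R ∧ q.2.1 ∪ q.2.2 = q.1.1 ∧ q.2.1 ∩ q.2.2 = ∅ ∧ q.1.2 ⊆ q.2.1 ∧
        ∀ u v, G.Adj u v → ¬(u ∈ q.2.1 ∧ v ∈ q.2.2)} ≡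
      Nat.card {p : Set V × Set V // p ∈ R ∧
        ∀ C : (G.induce p.1).ConnectedComponent, ∃ v : p.1, (v : V) ∈ p.2 ∧
          (G.induce p.1).connectedComponentMk v = C} [MOD 2] := by
  classical
  set Q : Set V × Set V → Prop := fun p =>
    ∀ C : (G.induce p.1).ConnectedComponent, ∃ v : p.1, (v : V) ∈ p.2 ∧
      (G.induce p.1).connectedComponentMk v = C with hQ
  set Cut : Set V × Set V → Set V × Set V → Prop := fun p c =>
    c.1 ∪ c.2 = p.1 ∧ c.1 ∩ c.2 = ∅ ∧ p.2 ⊆ c.1 ∧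
      ∀ u v, G.Adj u v → ¬(u ∈ c.1 ∧ v ∈ c.2) with hCut
  have eL : {q : (Set V × Set V) × Set V × Set V //
      q.1 ∈ R ∧ q.2.1 ∪ q.2.2 = q.1.1 ∧ q.2.1 ∩ q.2.2 = ∅ ∧ q.1.2 ⊆ q.2.1 ∧
      ∀ u v, G.Adj u v → ¬(u ∈ q.2.1 ∧ v ∈ q.2.2)} ≃
      (p : {p : Set V × Set V // p ∈ R}) × {c : Set V × Set V // Cut p.1 c} :=
    { toFun := fun q => ⟨⟨q.1.1, q.2.1⟩, ⟨q.1.2, q.2.2⟩⟩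
      invFun := fun s => ⟨(s.1.1, s.2.1), s.1.2, s.2.2⟩
      left_inv := fun q => rfl
      right_inv := fun s => rfl }
  have eR : {p : Set V × Set V // p ∈ R ∧ Q p} ≃ {i : {p : Set V × Set V // p ∈ R} // Q i.1} :=
    { toFun := fun p => ⟨⟨p.1, p.2.1⟩, p.2.2⟩
      invFun := fun i => ⟨i.1.1, i.1.2, i.2⟩
      left_inv := fun p => rfl
      right_inv := fun i => rfl }
  rw [Nat.card_congr eL, Nat.card_congr eR]
  haveI : ∀ p : {p : Set V × Set V // p ∈ R}, Fintype {c : Set V × Set V // Cut p.1 c} :=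
    fun p => Fintype.ofFinite _
  rw [Nat.card_eq_fintype_card, Nat.card_eq_fintype_card, Fintype.card_sigma,
    Fintype.card_subtype]
  show _ % 2 = _ % 2
  rw [Finset.sum_nat_mod, Finset.card_filter]
  congr 1
  apply Finset.sum_congr rfl
  intro p _
  rw [← Nat.card_eq_fintype_card]
  exact aux_parity G p.1.1 p.1.2 (hR _ p.2)
end

section
/- Isolation Lemma: Let F be a nonempty family of subsets of a finite universe U, and let N be a positive integer. If a weight ω(u) ∈ {1, 2, …, N} is chosen uniformly and independently at random for each u ∈ U, then with probability at least 1 − |U|/N there is a unique set S′ ∈ F minimizing ω(S′) = Σ_{u ∈ S′} ω(u). -/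
section aux

variable {U : Type*} [Fintype U] [DecidableEq U] {N : ℕ}

/-- weight of a set -/
def isoWt (ω : U → Fin N) (S : Finset U) : ℕ := ∑ u ∈ S, ((ω u : ℕ) + 1)

/-- `u` is singular for `ω`: there are minimizers containing and avoiding `u`. -/
def isoSing (F : Finset (Finset U)) (u : U) (ω : U → Fin N) : Prop :=
  ∃ S ∈ F, ∃ T ∈ F, (∀ T' ∈ F, isoWt ω S ≤ isoWt ω T') ∧
    (∀ T' ∈ F, isoWt ω T ≤ isoWt ω T') ∧ u ∈ S ∧ u ∉ T

lemma isoWt_agree {ω ω' : U → Fin N} {S : Finset U} (h : ∀ v ∈ S, ω v = ω' v) :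
    isoWt ω S = isoWt ω' S :=
  Finset.sum_congr rfl fun v hv => by rw [h v hv]

lemma isoSing_val_eq {F : Finset (Finset U)} {u : U} {ω ω' : U → Fin N}
    (hagree : ∀ v, v ≠ u → ω v = ω' v)
    (h : isoSing (N := N) F u ω) (h' : isoSing (N := N) F u ω') : ω u = ω' u := by
  obtain ⟨S, hS, T, hT, hSmin, hTmin, huS, huT⟩ := h
  obtain ⟨S', hS', T', hT', hS'min, hT'min, huS', huT'⟩ := h'
  have agT : ∀ (W : Finset U), u ∉ W → isoWt ω W = isoWt ω' W := fun W hW =>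
    isoWt_agree fun v hv => hagree v (by rintro rfl; exact hW hv)
  -- minima are equal
  have hm1 : isoWt ω' S' ≤ isoWt ω S := by
    have := hS'min T hT
    rw [← agT T huT] at this
    exact this.trans (hTmin S hS)
  have hm2 : isoWt ω S ≤ isoWt ω' S' := by
    have := hSmin T' hT'
    rw [agT T' huT'] at this
    exact this.trans (hT'min S' hS')
  have hm : isoWt ω S = isoWt ω' S' := le_antisymm hm2 hm1
  -- decompositions
  have decomp : ∀ (τ : U → Fin N) (W : Finset U), u ∈ W →
      isoWt τ W = (∑ v ∈ W.erase u, ((τ v : ℕ) + 1)) + ((τ u : ℕ) + 1) := by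
    intro τ W hW
    rw [isoWt, ← Finset.sum_erase_add _ _ hW]
  have erase_eq : ∀ (W : Finset U),
      (∑ v ∈ W.erase u, ((ω v : ℕ) + 1)) = ∑ v ∈ W.erase u, ((ω' v : ℕ) + 1) :=
    fun W => Finset.sum_congr rfl fun v hv => by
      rw [hagree v (Finset.ne_of_mem_erase hv)]
  -- ω u ≤ ω' u
  have h1 : (ω u : ℕ) ≤ ω' u := by
    have hle : isoWt ω' S' ≤ isoWt ω' S := hS'min S hS
    rw [decomp ω' S huS, ← erase_eq S, ← hm, decomp ω S huS] at hle
    omega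
  have h2 : (ω' u : ℕ) ≤ ω u := by
    have hle : isoWt ω S ≤ isoWt ω S' := hSmin S' hS'
    rw [decomp ω S' huS', erase_eq S', hm, decomp ω' S' huS'] at hle
    omega
  exact Fin.ext (le_antisymm h1 h2)

lemma iso_not_unique_sing {F : Finset (Finset U)} (hF : F.Nonempty) {ω : U → Fin N}
    (h : ¬ ∃! S, S ∈ F ∧ ∀ T ∈ F, isoWt ω S ≤ isoWt ω T) :
    ∃ u, isoSing (N := N) F u ω := by
  obtain ⟨S, hS, hSmin⟩ := F.exists_min_image (isoWt ω) hF
  have : ∃ T, (T ∈ F ∧ ∀ T' ∈ F, isoWt ω T ≤ isoWt ω T') ∧ T ≠ S := by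
    by_contra hc
    push_neg at hc
    exact h ⟨S, ⟨hS, hSmin⟩, fun T hT => hc T hT⟩
  obtain ⟨T, ⟨hT, hTmin⟩, hTS⟩ := this
  have : ∃ u, (u ∈ T ∧ u ∉ S) ∨ (u ∈ S ∧ u ∉ T) := by
    by_contra hc
    push_neg at hc
    exact hTS (Finset.ext fun u => ⟨fun h => (hc u).1 h, fun h => (hc u).2 h⟩)
  obtain ⟨u, h | h⟩ := this
  · exact ⟨u, T, hT, S, hS, hTmin, hSmin, h.1, h.2⟩
  · exact ⟨u, S, hS, T, hT, hSmin, hTmin, h.1, h.2⟩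

end aux

/-- Isolation Lemma: choosing each weight uniformly and independently from `{1, …, N}`,
with probability at least `1 - |U|/N` there is a unique minimum-weight set in `F`. -/
theorem stmt5 {U : Type*} [Fintype U] [DecidableEq U]
    (F : Finset (Finset U)) (hF : F.Nonempty) (N : ℕ) (hN : 0 < N) :
    (1 - (Fintype.card U : ℝ) / N) * (N : ℝ) ^ Fintype.card U ≤
      (Nat.card {ω : U → Fin N // ∃! S, S ∈ F ∧
        ∀ T ∈ F, ∑ u ∈ S, ((ω u : ℕ) + 1) ≤ ∑ u ∈ T, ((ω u : ℕ) + 1)} : ℝ) := by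
  classical
  set n := Fintype.card U with hn
  set P : (U → Fin N) → Prop := fun ω => ∃! S, S ∈ F ∧
    ∀ T ∈ F, ∑ u ∈ S, ((ω u : ℕ) + 1) ≤ ∑ u ∈ T, ((ω u : ℕ) + 1) with hP
  have hcard : Nat.card {ω : U → Fin N // P ω} = (Finset.univ.filter P).card := by
    rw [Nat.card_eq_fintype_card, Fintype.card_subtype]
  set G : Finset (U → Fin N) := Finset.univ.filter P with hG
  set B : Finset (U → Fin N) := Finset.univ.filter (fun ω => ¬ P ω) with hB
  have htot : G.card + B.card = N ^ n := by
    rw [hG, hB, Finset.card_filter_add_card_filter_not,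
      Finset.card_univ, Fintype.card_fun, Fintype.card_fin]
  -- each bad ω has a singular element
  have hBsub : B ⊆ Finset.univ.biUnion
      (fun u => Finset.univ.filter (isoSing (N := N) F u)) := by
    intro ω hω
    rw [hB, Finset.mem_filter] at hω
    obtain ⟨u, hu⟩ := iso_not_unique_sing hF hω.2
    exact Finset.mem_biUnion.2 ⟨u, Finset.mem_univ u,
      Finset.mem_filter.2 ⟨Finset.mem_univ ω, hu⟩⟩
  -- each singular class is small
  have hsmall : ∀ u : U,
      (Finset.univ.filter (isoSing (N := N) F u)).card * N ≤ N ^ n := by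
    intro u
    set Bu : Finset (U → Fin N) := Finset.univ.filter (isoSing (N := N) F u) with hBu
    have hinj : Set.InjOn (fun p : (U → Fin N) × Fin N => Function.update p.1 u p.2)
        ↑(Bu ×ˢ (Finset.univ : Finset (Fin N))) := by
      intro p hp q hq heq
      simp only [Finset.mem_coe, Finset.mem_product, hBu,
        Finset.mem_filter] at hp hq
      have h2 : p.2 = q.2 := by
        have := congrFun heq u
        simpa using this
      have hoff : ∀ v, v ≠ u → p.1 v = q.1 v := by
        intro v hv
        have := congrFun heq v
        simpa [Function.update_of_ne hv] using this
      have hat : p.1 u = q.1 u := isoSing_val_eq hoff hp.1.2 hq.1.2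
      have h1 : p.1 = q.1 := funext fun v => by
        by_cases hv : v = u
        · subst hv; exact hat
        · exact hoff v hv
      exact Prod.ext h1 h2
    have := Finset.card_le_card_of_injOn
      (fun p : (U → Fin N) × Fin N => Function.update p.1 u p.2)
      (fun p _ => Finset.mem_univ _) hinj
    rw [Finset.card_product, Finset.card_univ, Finset.card_univ, Fintype.card_fin,
      Fintype.card_fun, Fintype.card_fin] at this
    exact this
  have hBbound : B.card * N ≤ n * N ^ n := by
    calc B.card * N ≤ (Finset.univ.biUnion
        (fun u => Finset.univ.filter (isoSing (N := N) F u))).card * N :=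
          Nat.mul_le_mul_right _ (Finset.card_le_card hBsub)
    _ ≤ (∑ u : U, (Finset.univ.filter (isoSing (N := N) F u)).card) * N :=
          Nat.mul_le_mul_right _ (Finset.card_biUnion_le)
    _ = ∑ u : U, (Finset.univ.filter (isoSing (N := N) F u)).card * N := Finset.sum_mul ..
    _ ≤ ∑ _u : U, N ^ n := Finset.sum_le_sum fun u _ => hsmall u
    _ = n * N ^ n := by rw [Finset.sum_const, Finset.card_univ, smul_eq_mul]
  -- wrap up over the reals
  rw [hcard]
  have hNpos : (0 : ℝ) < N := by exact_mod_cast hN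
  have hGR : (G.card : ℝ) = (N : ℝ) ^ n - B.card := by
    have h := congrArg (Nat.cast : ℕ → ℝ) htot
    push_cast at h
    linarith
  have hBR : (B.card : ℝ) * N ≤ n * (N : ℝ) ^ n := by exact_mod_cast hBbound
  have hBle : (B.card : ℝ) ≤ (n : ℝ) / N * (N : ℝ) ^ n := by
    rw [div_mul_eq_mul_div, le_div_iff₀ hNpos]
    exact hBR
  have : (1 - (n : ℝ) / N) * (N : ℝ) ^ n ≤ G.card := by
    rw [hGR, sub_mul, one_mul]
    linarith
  exact this
end

section
/- Let G = (V, E) be a finite undirected graph and let G′ be obtained from G by adding, for each vertex v ∈ V, three new vertices a_v, b_v, c_v and the five edges a_v b_v, b_v c_v, c_v a_v, c_v v, and v a_v. Then for every ℓ ≥ 0: G contains ℓ pairwise vertex-disjoint cycles if and only if G′ admits a partition of its vertex set into at least ℓ + |V| vertex-disjoint cycles (a cycle cover with at least ℓ + |V| cycles). -/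
/-!
Given vertex-disjoint cycles `C₁, …, C_ℓ` of `G`, a cycle cover of `G′` with `ℓ + |V|` cycles
consists of the `Cᵢ` together with, for every `v`, the triangle `b_v a_v c_v` if `v` lies on some
`Cᵢ` and the square `b_v a_v v c_v` otherwise.

Conversely, the gadget `{v, a_v, b_v, c_v}` meets the rest of `G′` only in `v`, so a path of `G′`
with both ends in the gadget stays in it (it could only leave and re-enter through `v`). Hence the
cycle of a cover through `b_v` lies in the gadget and, as `b_v` has only the neighbours `a_v` and
`c_v`, contains `a_v`, `b_v` and `c_v`. These `|V|` cycles are distinct, and every other cycle of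
the cover avoids all gadget vertices, so it is a cycle of `G`; there are at least `ℓ` of them.
-/

/-- The graph `G'` obtained from `G` by attaching, for each vertex `v`, a triangle
`a_v b_v c_v` (the three vertices `(v, 0), (v, 1), (v, 2)`) together with the edges
`c_v v` and `v a_v`. -/
def cycleGadget {V : Type*} (G : SimpleGraph V) : SimpleGraph (V ⊕ V × Fin 3) :=
  SimpleGraph.fromRel (fun x y =>
    match x, y with
    | Sum.inl u, Sum.inl v => G.Adj u v
    | Sum.inl v, Sum.inr (w, i) => v = w ∧ (i = 0 ∨ i = 2)
    | Sum.inr (w, i), Sum.inr (w', j) => w = w' ∧ i ≠ j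
    | _, _ => False)

namespace SimpleGraph

variable {W V : Type*} {G : SimpleGraph V} {H : SimpleGraph W}

structure IsCyclePacking {ι : Type*} {u : ι → W} (w : ∀ i, H.Walk (u i) (u i)) : Prop where
  isCycle : ∀ i, (w i).IsCycle
  disjoint : ∀ i j, i ≠ j → ∀ x, x ∈ (w i).support → x ∉ (w j).support

lemma IsCyclePacking.comp {ι κ : Type*} {u : ι → W} {w : ∀ i, H.Walk (u i) (u i)}
    (hw : IsCyclePacking w) {e : κ → ι} (he : e.Injective) :
    IsCyclePacking (fun k => w (e k)) :=
  ⟨fun k => hw.isCycle (e k), fun _ _ hkl => hw.disjoint _ _ (he.ne hkl)⟩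

namespace Walk

lemma exists_map_eq_of_support_subset_range (f : G ↪g H) {a b : V} (p : H.Walk (f a) (f b))
    (hp : ∀ z ∈ p.support, z ∈ Set.range f) : ∃ q : G.Walk a b, q.map f.toHom = p := by
  suffices ∀ {y z : W} (p : H.Walk y z), (∀ t ∈ p.support, t ∈ Set.range f) →
      ∀ a b (ha : f a = y) (hb : f b = z), ∃ q : G.Walk a b, (q.map f.toHom).copy ha hb = p by
    simpa using this p hp a b rfl rfl
  intro y z p hp
  induction p with
  | nil =>
    rintro a b rfl hb
    obtain rfl := f.injective hb
    exact ⟨nil, rfl⟩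
  | cons h p ih =>
    rename_i y' _
    rintro a b rfl rfl
    obtain ⟨c, rfl⟩ := hp y' (by simp)
    obtain ⟨q, hq⟩ := ih (fun t ht => hp t (by simp [ht])) c b rfl rfl
    exact ⟨cons (f.map_adj_iff.mp h) q, by simpa using hq⟩

lemma IsCycle.exists_map_eq_of_support_subset_range (f : G ↪g H) {x : W} {p : H.Walk x x}
    (hp : p.IsCycle) (hsupp : ∀ z ∈ p.support, z ∈ Set.range f) :
    ∃ (a : V) (q : G.Walk a a), q.IsCycle ∧ p.support = q.support.map f := by
  obtain ⟨a, rfl⟩ := hsupp x p.start_mem_support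
  obtain ⟨q, rfl⟩ := p.exists_map_eq_of_support_subset_range f hsupp
  exact ⟨a, q, hp.of_map, support_map _ _⟩

lemma IsCycle.mem_support_of_forall_adj {u t a b : W} {c : H.Walk u u} (hc : c.IsCycle)
    (ht : t ∈ c.support) (hnbr : ∀ y, H.Adj t y → y = a ∨ y = b) :
    a ∈ c.support ∧ b ∈ c.support := by
  classical
  set c' := c.rotate t ht
  have hc' : c'.IsCycle := hc.rotate ht
  have hnil : ¬ c'.Nil := hc'.not_nil
  have hsnd : c'.snd ∈ c.support := (mem_support_rotate_iff c t ht).mp (c'.getVert_mem_support 1)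
  have hpen : c'.penultimate ∈ c.support :=
    (mem_support_rotate_iff c t ht).mp (c'.getVert_mem_support _)
  rcases hnbr _ (c'.adj_snd hnil) with h1 | h1 <;>
    rcases hnbr _ (c'.adj_penultimate hnil).symm with h2 | h2
  · exact absurd (h1.trans h2.symm) hc'.snd_ne_penultimate
  · exact ⟨h1 ▸ hsnd, h2 ▸ hpen⟩
  · exact ⟨h2 ▸ hpen, h1 ▸ hsnd⟩
  · exact absurd (h1.trans h2.symm) hc'.snd_ne_penultimate

variable {S : Set W} {s : W}

lemma mem_support_of_not_mem_of_mem (hS : ∀ ⦃y z⦄, y ∈ S → z ∉ S → H.Adj y z → y = s)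
    {y z : W} (p : H.Walk y z) (hy : y ∉ S) (hz : z ∈ S) : s ∈ p.support := by
  induction p with
  | nil => exact absurd hz hy
  | cons h p ih =>
    rename_i y' _
    by_cases hy' : y' ∈ S
    · simp [← hS hy' hy h.symm]
    · simp [ih hy' hz]

lemma IsPath.support_subset (hS : ∀ ⦃y z⦄, y ∈ S → z ∉ S → H.Adj y z → y = s)
    {y z : W} {p : H.Walk y z} (hp : p.IsPath) (hy : y ∈ S) (hz : z ∈ S) :
    ∀ t ∈ p.support, t ∈ S := by
  induction p with
  | nil => simpa using hy
  | cons h p ih =>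
    rename_i y' _
    rw [cons_isPath_iff] at hp
    by_cases hy' : y' ∈ S
    · simpa [hy] using ih hp.1 hy' hz
    · exact absurd (hS hy hy' h ▸ p.mem_support_of_not_mem_of_mem hS hy' hz) hp.2

lemma IsCycle.support_subset (hS : ∀ ⦃y z⦄, y ∈ S → z ∉ S → H.Adj y z → y = s)
    {u t : W} {c : H.Walk u u} (hc : c.IsCycle) (htc : t ∈ c.support) (htS : t ∈ S)
    (hts : t ≠ s) : ∀ z ∈ c.support, z ∈ S := by
  classical
  set c' := c.rotate t htc
  have hc' : c'.IsCycle := hc.rotate htc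
  have hsnd : c'.snd ∈ S := by
    by_contra h
    exact hts (hS htS h (c'.adj_snd hc'.not_nil))
  intro z hz
  rw [← mem_support_rotate_iff c t htc, ← c'.cons_tail_support,
    ← c'.support_tail_of_not_nil hc'.not_nil, List.mem_cons] at hz
  rcases hz with rfl | hz
  · exact htS
  · exact hc'.isPath_tail.support_subset hS hsnd htS z hz

end Walk

lemma IsCyclePacking.exists_of_support_subset_range {ι : Type*} {u : ι → W}
    {w : ∀ i, H.Walk (u i) (u i)} (hw : IsCyclePacking w) (f : G ↪g H)
    (hsupp : ∀ i, ∀ z ∈ (w i).support, z ∈ Set.range f) :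
    ∃ (v : ι → V) (w' : ∀ i, G.Walk (v i) (v i)), IsCyclePacking w' := by
  choose v w' hcyc hsupp' using fun i =>
    (hw.isCycle i).exists_map_eq_of_support_subset_range f (hsupp i)
  refine ⟨v, w', hcyc, fun i j hij x hi hj => hw.disjoint i j hij (f x) ?_ ?_⟩
  · simpa [hsupp'] using hi
  · simpa [hsupp'] using hj

end SimpleGraph

section CycleGadget

open SimpleGraph Sum

variable {V : Type*} {G : SimpleGraph V}

@[simp] lemma cycleGadget_adj_inl_inl {x y : V} :
    (cycleGadget G).Adj (inl x) (inl y) ↔ G.Adj x y := by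
  simp only [cycleGadget, fromRel_adj, ne_eq, inl.injEq]
  exact ⟨fun h => h.2.elim id fun h => h.symm, fun h => ⟨h.ne, .inl h⟩⟩

@[simp] lemma cycleGadget_adj_inl_inr {x y : V} {i : Fin 3} :
    (cycleGadget G).Adj (inl x) (inr (y, i)) ↔ x = y ∧ (i = 0 ∨ i = 2) := by
  simp [cycleGadget]

@[simp] lemma cycleGadget_adj_inr_inl {x y : V} {i : Fin 3} :
    (cycleGadget G).Adj (inr (y, i)) (inl x) ↔ x = y ∧ (i = 0 ∨ i = 2) := by
  simp [cycleGadget]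

@[simp] lemma cycleGadget_adj_inr_inr {x y : V} {i j : Fin 3} :
    (cycleGadget G).Adj (inr (x, i)) (inr (y, j)) ↔ x = y ∧ i ≠ j := by
  simp only [cycleGadget, fromRel_adj]
  grind

variable (G) in
def cycleGadgetInl : G ↪g cycleGadget G := ⟨.inl, cycleGadget_adj_inl_inl⟩

/-- The vertex `v` of `G` whose gadget `{v, a_v, b_v, c_v}` contains `z`. -/
def gadgetBase : V ⊕ V × Fin 3 → V := Sum.elim id Prod.fst

lemma eq_inl_of_cycleGadget_adj {y z : V ⊕ V × Fin 3} (h : (cycleGadget G).Adj y z)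
    (hyz : gadgetBase z ≠ gadgetBase y) : y = inl (gadgetBase y) := by
  rcases y with a | ⟨a, i⟩ <;> rcases z with b | ⟨b, j⟩ <;> simp_all [gadgetBase]

lemma eq_of_cycleGadget_adj_inr_one {x : V} {z : V ⊕ V × Fin 3}
    (h : (cycleGadget G).Adj (inr (x, 1)) z) : z = inr (x, 0) ∨ z = inr (x, 2) := by
  rcases z with b | ⟨b, j⟩
  · simp at h
  · simp only [cycleGadget_adj_inr_inr] at h
    obtain ⟨rfl, hj⟩ := h
    fin_cases j <;> simp_all

namespace SimpleGraph.Walk.IsCycle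

variable {s : V ⊕ V × Fin 3} {c : (cycleGadget G).Walk s s} {x : V}

lemma gadgetBase_eq (hc : c.IsCycle) (hx : inr (x, 1) ∈ c.support) :
    ∀ z ∈ c.support, gadgetBase z = x :=
  hc.support_subset (S := gadgetBase ⁻¹' {x}) (s := inl x)
    (fun _ _ hy hz h => (eq_inl_of_cycleGadget_adj h (by simp_all)).trans (by simp_all))
    hx rfl (by simp)

lemma inr_mem_support (hc : c.IsCycle) (hx : inr (x, 1) ∈ c.support) (i : Fin 3) :
    inr (x, i) ∈ c.support := by
  have := hc.mem_support_of_forall_adj hx fun _ => eq_of_cycleGadget_adj_inr_one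
  fin_cases i
  exacts [this.1, hx, this.2]

end SimpleGraph.Walk.IsCycle

variable (G) in
/-- The triangle `b_x a_x c_x`, or for `true` the square `b_x a_x x c_x`. -/
def gadgetCycle (x : V) : Bool → (cycleGadget G).Walk (inr (x, 1)) (inr (x, 1))
  | false =>
    .cons (v := inr (x, 0)) (by simp) <| .cons (v := inr (x, 2)) (by simp) <| .cons (by simp) .nil
  | true =>
    .cons (v := inr (x, 0)) (by simp) <| .cons (v := inl x) (by simp) <|
      .cons (v := inr (x, 2)) (by simp) <| .cons (by simp) .nil

lemma isCycle_gadgetCycle (x : V) (b : Bool) : (gadgetCycle G x b).IsCycle := by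
  cases b <;> simp [gadgetCycle, Walk.cons_isCycle_iff]

lemma mem_support_gadgetCycle {x : V} {b : Bool} {z : V ⊕ V × Fin 3} :
    z ∈ (gadgetCycle G x b).support ↔ gadgetBase z = x ∧ (z = inl x → b = true) := by
  rcases z with a | ⟨a, i⟩ <;> cases b <;> simp [gadgetCycle, gadgetBase] <;> fin_cases i <;> simp

section Forward

variable {ι : Type*} {v : ι → V} (w : ∀ i, G.Walk (v i) (v i))

variable (v) in
def gadgetCoverVert : ι ⊕ V → V ⊕ V × Fin 3 := Sum.elim (inl ∘ v) fun x => inr (x, 1)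

open Classical in
noncomputable def gadgetCover :
    ∀ k, (cycleGadget G).Walk (gadgetCoverVert v k) (gadgetCoverVert v k)
  | .inl i => (w i).map (cycleGadgetInl G).toHom
  | .inr x => gadgetCycle G x (decide (∀ i, x ∉ (w i).support))

lemma support_gadgetCover_inl (i : ι) :
    (gadgetCover w (.inl i)).support = (w i).support.map inl :=
  Walk.support_map _ _

lemma mem_support_gadgetCover_inr {x : V} {z : V ⊕ V × Fin 3} :
    z ∈ (gadgetCover w (.inr x)).support ↔
      gadgetBase z = x ∧ (z = inl x → ∀ i, x ∉ (w i).support) := by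
  change z ∈ (gadgetCycle G x _).support ↔ _
  simp only [mem_support_gadgetCycle, decide_eq_true_eq]

lemma not_mem_support_gadgetCover_inr {i : ι} {x : V} {z : V ⊕ V × Fin 3}
    (hz : z ∈ (gadgetCover w (.inl i)).support) : z ∉ (gadgetCover w (.inr x)).support := by
  rw [support_gadgetCover_inl, List.mem_map] at hz
  obtain ⟨a, ha, rfl⟩ := hz
  rw [mem_support_gadgetCover_inr]
  rintro ⟨rfl, hfree⟩
  exact hfree rfl i ha

lemma isCyclePacking_gadgetCover (hw : IsCyclePacking w) : IsCyclePacking (gadgetCover w) := by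
  refine ⟨?_, ?_⟩
  · rintro (i | x)
    · exact (hw.isCycle i).map (cycleGadgetInl G).injective
    · exact isCycle_gadgetCycle x _
  · rintro (i | x) (j | y) hij z hz hz'
    · rw [support_gadgetCover_inl, List.mem_map] at hz hz'
      obtain ⟨a, ha, rfl⟩ := hz
      obtain ⟨b, hb, hba⟩ := hz'
      exact hw.disjoint i j (by simpa using hij) a ha (inl_injective hba ▸ hb)
    · exact not_mem_support_gadgetCover_inr w hz hz'
    · exact not_mem_support_gadgetCover_inr w hz' hz
    · rw [mem_support_gadgetCover_inr] at hz hz'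
      exact hij (congrArg Sum.inr (hz.1.symm.trans hz'.1))

lemma exists_mem_support_gadgetCover (z : V ⊕ V × Fin 3) :
    ∃ k, z ∈ (gadgetCover w k).support := by
  rcases z with a | ⟨x, j⟩
  · by_cases ha : ∃ i, a ∈ (w i).support
    · obtain ⟨i, hi⟩ := ha
      exact ⟨.inl i, by simpa [support_gadgetCover_inl] using hi⟩
    · exact ⟨.inr a, by simpa [mem_support_gadgetCover_inr, gadgetBase] using ha⟩
  · exact ⟨.inr x, by simp [mem_support_gadgetCover_inr, gadgetBase]⟩

end Forward

section Backward

variable {ι : Type*} {u : ι → V ⊕ V × Fin 3} {w : ∀ i, (cycleGadget G).Walk (u i) (u i)}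

lemma SimpleGraph.IsCyclePacking.support_subset_range_inl (hw : IsCyclePacking w) {ix : V → ι}
    (hix : ∀ x, inr (x, 1) ∈ (w (ix x)).support) {j : ι} (hj : j ∉ Set.range ix) :
    ∀ z ∈ (w j).support, z ∈ Set.range inl := by
  rintro (a | ⟨x, k⟩) hz
  · exact ⟨a, rfl⟩
  · exact absurd ((hw.isCycle _).inr_mem_support (hix x) k)
      (hw.disjoint j (ix x) (fun h => hj ⟨x, h.symm⟩) _ hz)

lemma SimpleGraph.IsCyclePacking.injective_of_inr_one_mem (hw : IsCyclePacking w) {ix : V → ι}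
    (hix : ∀ x, inr (x, 1) ∈ (w (ix x)).support) : ix.Injective := by
  intro x y hxy
  have := (hw.isCycle (ix x)).gadgetBase_eq (hix x) _ (hxy ▸ hix y)
  simpa [gadgetBase] using this.symm

theorem exists_isCyclePacking_of_cycleGadget [Fintype V] [Fintype ι] (hw : IsCyclePacking w)
    (hcov : ∀ z, ∃ i, z ∈ (w i).support) :
    ∃ s : Finset ι, Fintype.card ι = s.card + Fintype.card V ∧
      ∃ (v : s → V) (w' : ∀ i : s, G.Walk (v i) (v i)), IsCyclePacking w' := by
  classical
  choose ix hix using fun x : V => hcov (inr (x, 1))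
  have hinj := hw.injective_of_inr_one_mem hix
  refine ⟨(Finset.univ.image ix)ᶜ, ?_, ?_⟩
  · rw [Finset.card_compl, Finset.card_image_of_injective _ hinj, Finset.card_univ,
      Nat.sub_add_cancel (Fintype.card_le_of_injective ix hinj)]
  · refine (hw.comp Subtype.val_injective).exists_of_support_subset_range (cycleGadgetInl G) ?_
    rintro ⟨j, hj⟩
    exact hw.support_subset_range_inl hix (by simpa using hj)

end Backward

end CycleGadget

/-- `G` contains `ℓ` vertex-disjoint cycles iff `G'` admits a cycle cover with at least
`ℓ + |V|` cycles. -/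
theorem stmt11 {V : Type*} [Fintype V] (G : SimpleGraph V) (ℓ : ℕ) :
    (∃ (v : Fin ℓ → V) (w : ∀ i, G.Walk (v i) (v i)),
        (∀ i, (w i).IsCycle) ∧
        ∀ i j, i ≠ j → ∀ x, x ∈ (w i).support → x ∉ (w j).support) ↔
      (∃ n : ℕ, ℓ + Fintype.card V ≤ n ∧
        ∃ (u : Fin n → (V ⊕ V × Fin 3)) (w : ∀ i, (cycleGadget G).Walk (u i) (u i)),
          (∀ i, (w i).IsCycle) ∧
          (∀ i j, i ≠ j → ∀ x, x ∈ (w i).support → x ∉ (w j).support) ∧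
          ∀ x : V ⊕ V × Fin 3, ∃ i, x ∈ (w i).support) := by
  constructor
  · rintro ⟨v, w, hcyc, hdisj⟩
    let e : Fin (ℓ + Fintype.card V) ≃ Fin ℓ ⊕ V :=
      ((Equiv.sumCongr (.refl _) (Fintype.equivFin V)).trans finSumFinEquiv).symm
    have hw := isCyclePacking_gadgetCover w ⟨hcyc, hdisj⟩ |>.comp e.injective
    refine ⟨_, le_rfl, _, _, hw.isCycle, hw.disjoint, fun z => ?_⟩
    obtain ⟨k, hk⟩ := exists_mem_support_gadgetCover w z
    obtain ⟨i, rfl⟩ := e.surjective k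
    exact ⟨i, hk⟩
  · rintro ⟨n, hn, u, w, hcyc, hdisj, hcov⟩
    obtain ⟨s, hs, v, w', hw'⟩ := exists_isCyclePacking_of_cycleGadget ⟨hcyc, hdisj⟩ hcov
    obtain ⟨e⟩ : Nonempty (Fin ℓ ↪ s) :=
      Function.Embedding.nonempty_of_card_le <| by
        rw [Fintype.card_fin] at hs ⊢; rw [Fintype.card_coe]; omega
    have hw := hw'.comp e.injective
    exact ⟨_, _, hw.isCycle, hw.disjoint⟩
end

section
/- Let G = (V, E) be a finite connected undirected graph with |V| ≥ 2 and let 1 ≤ k ≤ |V| − 1. Then G has a connected dominating set of size at most k if and only if G has a spanning tree with at least |V| − k leaves. -/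
/-!
Given a connected dominating set `D`, keep the edges of `G` inside `D` and hang every vertex
outside `D` on a single neighbour in `D`; this graph is connected, and any spanning tree of it
has all vertices outside `D` as leaves. Conversely, a path in a tree passes through no leaf
except at its ends, so the non-leaves induce a connected subgraph, and they dominate unless
the tree is a single edge, in which case one endpoint alone is a connected dominating set.
-/

namespace SimpleGraph

variable {V : Type*}

def IsConnectedDominating (G : SimpleGraph V) (D : Set V) : Prop :=
  (G.induce D).Connected ∧ ∀ v, v ∈ D ∨ ∃ u ∈ D, G.Adj u v

def IsLeaf (T : SimpleGraph V) (v : V) : Prop :=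
  (T.neighborSet v).ncard = 1

def pendantGraph (G : SimpleGraph V) (D : Set V) (f : V → V) : SimpleGraph V :=
  fromRel fun a b => a ∈ D ∧ b ∈ D ∧ G.Adj a b ∨ a ∉ D ∧ b = f a

section pendantGraph

variable {G : SimpleGraph V} {D : Set V} {f : V → V}

lemma pendantGraph_le (hf : ∀ v ∉ D, G.Adj v (f v)) : G.pendantGraph D f ≤ G := by
  intro a b hab
  simp only [pendantGraph, fromRel_adj] at hab
  rcases hab.2 with (⟨-, -, h⟩ | ⟨ha, rfl⟩) | (⟨-, -, h⟩ | ⟨hb, rfl⟩)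
  · exact h
  · exact hf a ha
  · exact h.symm
  · exact (hf b hb).symm

lemma pendantGraph_adj_of_notMem (hf : ∀ v ∉ D, f v ∈ D) {v : V} (hv : v ∉ D) :
    (G.pendantGraph D f).Adj v (f v) := by
  rw [pendantGraph, fromRel_adj]
  exact ⟨fun h => hv (h ▸ hf v hv), Or.inl (Or.inr ⟨hv, rfl⟩)⟩

lemma neighborSet_pendantGraph_of_notMem (hf : ∀ v ∉ D, f v ∈ D) {v : V} (hv : v ∉ D) :
    (G.pendantGraph D f).neighborSet v = {f v} := by
  ext w
  refine ⟨fun hvw => ?_, fun hw => Set.mem_singleton_iff.mp hw ▸ pendantGraph_adj_of_notMem hf hv⟩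
  simp only [mem_neighborSet, pendantGraph, fromRel_adj] at hvw
  rcases hvw.2 with (⟨h, -⟩ | ⟨-, rfl⟩) | (⟨-, h, -⟩ | ⟨hw, rfl⟩)
  · exact absurd h hv
  · rfl
  · exact absurd h hv
  · exact absurd (hf w hw) hv

lemma connected_pendantGraph (hD : (G.induce D).Connected) (hf : ∀ v ∉ D, f v ∈ D) :
    (G.pendantGraph D f).Connected := by
  let φ : G.induce D →g G.pendantGraph D f :=
    ⟨Subtype.val, fun {a b} hab => by
      rw [pendantGraph, fromRel_adj]
      exact ⟨fun h => hab.ne (Subtype.ext h), Or.inl (Or.inl ⟨a.2, b.2, hab⟩)⟩⟩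
  have reach_mem : ∀ v, ∃ d : D, (G.pendantGraph D f).Reachable v d := fun v => by
    by_cases hv : v ∈ D
    · exact ⟨⟨v, hv⟩, .rfl⟩
    · exact ⟨⟨f v, hf v hv⟩, (pendantGraph_adj_of_notMem hf hv).reachable⟩
  have : Nonempty V := hD.nonempty.map Subtype.val
  refine .mk fun u v => ?_
  obtain ⟨du, hu⟩ := reach_mem u
  obtain ⟨dv, hv⟩ := reach_mem v
  exact hu.trans (((hD.preconnected du dv).map φ).trans hv.symm)

end pendantGraph

variable {G T : SimpleGraph V} {D : Set V}

lemma IsConnectedDominating.mono (hTG : T ≤ G) (hD : T.IsConnectedDominating D) :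
    G.IsConnectedDominating D :=
  ⟨hD.1.mono fun _ _ h => hTG h,
    fun v => (hD.2 v).imp_right fun ⟨u, hu, huv⟩ => ⟨u, hu, hTG huv⟩⟩

lemma IsConnectedDominating.exists_isTree_le (hD : G.IsConnectedDominating D) :
    ∃ T ≤ G, T.IsTree ∧ Dᶜ ⊆ {v | T.IsLeaf v} := by
  choose! f hfD hfadj using fun v (hv : v ∉ D) => (hD.2 v).resolve_left hv
  obtain ⟨T, hTH, hT⟩ := (connected_pendantGraph (G := G) hD.1 hfD).exists_isTree_le
  refine ⟨T, hTH.trans (pendantGraph_le fun v hv => (hfadj v hv).symm), hT, fun v hv => ?_⟩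
  have hvf : v ≠ f v := fun h => hv (h ▸ hfD v hv)
  have hsub : T.neighborSet v ⊆ {f v} :=
    neighborSet_pendantGraph_of_notMem (G := G) hfD hv ▸ fun w h => hTH h
  have hne : (T.neighborSet v).Nonempty :=
    (hT.connected.preconnected v (f v)).nonempty_neighborSet_left hvf
  simp only [Set.mem_ofPred_eq, IsLeaf, (hne.subset_singleton_iff.mp hsub), Set.ncard_singleton]

lemma IsLeaf.neighborSet_eq {v : V} (hv : T.IsLeaf v) {u : V} (huv : T.Adj v u) :
    T.neighborSet v = {u} := by
  obtain ⟨w, hw⟩ := Set.ncard_eq_one.mp hv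
  have hu : u ∈ T.neighborSet v := huv
  rw [hw, Set.mem_singleton_iff] at hu
  rw [hw, hu]

lemma Connected.eq_or_eq_of_isLeaf_of_isLeaf (hT : T.Connected) {u v : V} (huv : T.Adj u v)
    (hu : T.IsLeaf u) (hv : T.IsLeaf v) (w : V) : w = u ∨ w = v := by
  by_contra! hw
  obtain ⟨p⟩ := hT.preconnected u w
  obtain ⟨d, -, hd₁, hd₂⟩ := p.exists_boundary_dart {u, v} (by simp) (by simpa using hw)
  have hnb : ∀ x ∈ ({u, v} : Set V), T.neighborSet x ⊆ {u, v} := by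
    rintro x (rfl | rfl)
    · exact (hu.neighborSet_eq huv).trans_subset (by simp)
    · exact (hv.neighborSet_eq huv.symm).trans_subset (by simp)
  exact hd₂ (hnb _ hd₁ d.adj)

lemma IsTree.isConnectedDominating (hT : T.IsTree) (hD : {v | ¬T.IsLeaf v} ⊆ D)
    (hne : D.Nonempty) : T.IsConnectedDominating D := by
  have leaf_of_notMem : ∀ v ∉ D, T.IsLeaf v := fun v hv => by_contra fun h => hv (hD h)
  refine ⟨?_, fun v => or_iff_not_imp_left.mpr fun hv => ?_⟩
  · have : Nonempty D := hne.to_subtype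
    refine ⟨hT.connected.preconnected.induce_of_degree_eq_one fun v hv => ?_⟩
    obtain ⟨u, hu⟩ := Set.ncard_eq_one.mp (leaf_of_notMem v hv)
    exact hu ▸ Set.subsingleton_singleton
  · obtain ⟨u, hu⟩ := Set.ncard_eq_one.mp (leaf_of_notMem v hv)
    have hvu : T.Adj v u := by rw [← mem_neighborSet, hu]; rfl
    refine ⟨u, by_contra fun huD => ?_, hvu.symm⟩
    obtain ⟨d, hd⟩ := hne
    rcases hT.connected.eq_or_eq_of_isLeaf_of_isLeaf hvu (leaf_of_notMem v hv)
      (leaf_of_notMem u huD) d with rfl | rfl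
    exacts [hv hd, huD hd]

lemma IsTree.exists_isConnectedDominating_ncard_le [Finite V] (hT : T.IsTree) :
    ∃ D : Set V, D.ncard ≤ max 1 (Nat.card V - {v | T.IsLeaf v}.ncard) ∧
      T.IsConnectedDominating D := by
  obtain ⟨v, hv⟩ | hall := Set.eq_empty_or_nonempty {v | ¬T.IsLeaf v} |>.symm
  · refine ⟨{v | ¬T.IsLeaf v}, ?_, hT.isConnectedDominating le_rfl ⟨v, hv⟩⟩
    have := Set.ncard_add_ncard_compl {v | T.IsLeaf v}
    exact le_max_of_le_right (by rw [Set.compl_ofPred] at this; omega)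
  · obtain ⟨v⟩ := hT.connected.nonempty
    exact ⟨{v}, by simp, hT.isConnectedDominating (by simp [hall]) (Set.singleton_nonempty v)⟩

end SimpleGraph

open SimpleGraph in
theorem stmt15_general {V : Type*} [Fintype V] (G : SimpleGraph V)
    (k : ℕ) (hk1 : 1 ≤ k) :
    (∃ D : Set V, D.ncard ≤ k ∧ (G.induce D).Connected ∧
        ∀ v, v ∈ D ∨ ∃ u ∈ D, G.Adj u v) ↔
      (∃ T : SimpleGraph V, T ≤ G ∧ T.IsTree ∧
        Fintype.card V - k ≤ {v : V | (T.neighborSet v).ncard = 1}.ncard) := by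
  constructor
  · rintro ⟨D, hDk, hD⟩
    obtain ⟨T, hTG, hT, hleaves⟩ := IsConnectedDominating.exists_isTree_le hD
    have hcompl := Set.ncard_add_ncard_compl D
    rw [Nat.card_eq_fintype_card] at hcompl
    have : Dᶜ.ncard ≤ {v : V | (T.neighborSet v).ncard = 1}.ncard := Set.ncard_le_ncard hleaves
    exact ⟨T, hTG, hT, by omega⟩
  · rintro ⟨T, hTG, hT, hleaves⟩
    obtain ⟨D, hDcard, hD⟩ := hT.exists_isConnectedDominating_ncard_le
    rw [Nat.card_eq_fintype_card] at hDcard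
    change _ ≤ max 1 (_ - {v : V | (T.neighborSet v).ncard = 1}.ncard) at hDcard
    exact ⟨D, by omega, hD.mono hTG⟩

/-- A connected graph on at least two vertices has a connected dominating set of size at
most `k` iff it has a spanning tree with at least `|V| - k` leaves. -/
theorem stmt15 {V : Type*} [Fintype V] (G : SimpleGraph V) (hG : G.Connected)
    (h2 : 2 ≤ Fintype.card V) (k : ℕ) (hk1 : 1 ≤ k) (hk2 : k ≤ Fintype.card V - 1) :
    (∃ D : Set V, D.ncard ≤ k ∧ (G.induce D).Connected ∧
        ∀ v, v ∈ D ∨ ∃ u ∈ D, G.Adj u v) ↔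
      (∃ T : SimpleGraph V, T ≤ G ∧ T.IsTree ∧
        Fintype.card V - k ≤ {v : V | (T.neighborSet v).ncard = 1}.ncard) :=
  stmt15_general G k hk1
end
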